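/- arXiv:2507.05738 — 3 statements merged into one kernel-verified Lean document; each statement's English description precedes it below -/
import Mathlib

section
/- In any pure-strategy Nash equilibrium of the second-price auction (k = 2), the seller's revenue lies in the interval [0, v_1]. -/
open Classical

/-- The k-th highest bid (k counted from 1). -/
noncomputable def kthHighest {n : ℕ} (b : Fin n → ℝ) (k : ℕ) : ℝ :=
  ((List.ofFn b).mergeSort (fun x y => decide (y ≤ x))).getD (k - 1) 0

/-- Agent `i` wins: her bid is highest, with ties broken toward the
agent with the highest valuation, i.e. (for strictly decreasing valuations)
the lowest index among the maximal bidders. -/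
def wins {n : ℕ} (b : Fin n → ℝ) (i : Fin n) : Prop :=
  (∀ j, b j ≤ b i) ∧ ∀ j, b j = b i → i ≤ j

/-- The price paid by the winner in the k-price auction (2 ≤ k ≤ n), or in the
first-price auction (the case k = n+1), where the winner pays the highest bid. -/
noncomputable def price {n : ℕ} (k : ℕ) (b : Fin n → ℝ) : ℝ :=
  if k = n + 1 then kthHighest b 1 else kthHighest b k

/-- The winner gets her valuation minus the price; losers get 0. -/
noncomputable def utility {n : ℕ} (v : Fin n → ℝ) (k : ℕ) (b : Fin n → ℝ)
    (i : Fin n) : ℝ :=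
  if wins b i then v i - price k b else 0

/-- Pure-strategy Nash equilibrium with nonnegative bids: no agent can strictly
improve her utility by a unilateral deviation to another nonnegative bid. -/
def NashEq {n : ℕ} (v : Fin n → ℝ) (k : ℕ) (b : Fin n → ℝ) : Prop :=
  (∀ i, 0 ≤ b i) ∧
  ∀ i : Fin n, ∀ b' : ℝ, 0 ≤ b' →
    utility v k (Function.update b i b') i ≤ utility v k b i

/-- One-based valuation indexing, with the convention `v_{n+1} = 0`. -/
noncomputable def vIdx {n : ℕ} (v : Fin n → ℝ) (j : ℕ) : ℝ :=
  if h : 1 ≤ j ∧ j ≤ n then v ⟨j - 1, by omega⟩ else 0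


/-!
Deviating to the bid `0` guarantees the winner a nonnegative utility: either she loses, or every
bid is then `0` and so is the price. Hence in equilibrium the winner pays at most her own
valuation, which is at most `v_1`; the price is nonnegative since it is one of the bids (or `0`).
-/

lemma kthHighest_eq_zero_or_exists_eq {n : ℕ} (b : Fin n → ℝ) (k : ℕ) :
    kthHighest b k = 0 ∨ ∃ j, kthHighest b k = b j := by
  unfold kthHighest
  generalize hl : (List.ofFn b).mergeSort (fun x y => decide (y ≤ x)) = l
  by_cases h : k - 1 < l.length
  · have hmem : l.getD (k - 1) 0 ∈ l := by
      rw [List.getD_eq_getElem _ _ h]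
      exact List.getElem_mem h
    subst hl
    rw [List.mem_mergeSort, List.mem_ofFn] at hmem
    obtain ⟨j, hj⟩ := hmem
    exact Or.inr ⟨j, hj.symm⟩
  · exact Or.inl (List.getD_eq_default _ _ (not_lt.mp h))

lemma kthHighest_nonneg {n : ℕ} {b : Fin n → ℝ} (hb : ∀ i, 0 ≤ b i) (k : ℕ) :
    0 ≤ kthHighest b k := by
  rcases kthHighest_eq_zero_or_exists_eq b k with h | ⟨j, h⟩ <;> simp [h, hb]

lemma kthHighest_eq_zero {n : ℕ} {b : Fin n → ℝ} (hb : ∀ i, b i = 0) (k : ℕ) :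
    kthHighest b k = 0 := by
  rcases kthHighest_eq_zero_or_exists_eq b k with h | ⟨j, h⟩ <;> simp [h, hb]

lemma price_nonneg {n : ℕ} {b : Fin n → ℝ} (hb : ∀ i, 0 ≤ b i) (k : ℕ) : 0 ≤ price k b := by
  unfold price
  split_ifs <;> exact kthHighest_nonneg hb _

lemma price_eq_zero {n : ℕ} {b : Fin n → ℝ} (hb : ∀ i, b i = 0) (k : ℕ) : price k b = 0 := by
  unfold price
  split_ifs <;> exact kthHighest_eq_zero hb _

lemma exists_wins {n : ℕ} (hn : 0 < n) (b : Fin n → ℝ) : ∃ i, wins b i := by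
  have : Nonempty (Fin n) := ⟨⟨0, hn⟩⟩
  obtain ⟨m, hm⟩ := Finite.exists_max b
  let ties : Finset (Fin n) := Finset.univ.filter (fun j => b j = b m)
  have hties : ties.Nonempty := ⟨m, by simp [ties]⟩
  have hmin : b (ties.min' hties) = b m := by
    simpa [ties] using ties.min'_mem hties
  refine ⟨ties.min' hties, fun j => hmin ▸ hm j, fun j hj => ties.min'_le j ?_⟩
  simpa [ties] using hj.trans hmin

lemma utility_of_wins {n : ℕ} (v : Fin n → ℝ) (k : ℕ) {b : Fin n → ℝ} {i : Fin n}
    (hi : wins b i) : utility v k b i = v i - price k b := if_pos hi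

lemma utility_update_zero_nonneg {n : ℕ} {v : Fin n → ℝ} (k : ℕ) {b : Fin n → ℝ}
    (hb : ∀ j, 0 ≤ b j) {i : Fin n} (hvi : 0 ≤ v i) :
    0 ≤ utility v k (Function.update b i 0) i := by
  unfold utility
  split_ifs with hwin
  · have hzero : ∀ j, Function.update b i 0 j = 0 := by
      intro j
      rcases eq_or_ne j i with rfl | hji
      · exact Function.update_self _ _ _
      · have hle := hwin.1 j
        rw [Function.update_self, Function.update_of_ne hji] at hle
        rw [Function.update_of_ne hji]
        exact le_antisymm hle (hb j)
    rw [price_eq_zero hzero]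
    linarith
  · exact le_rfl

namespace NashEq

variable {n : ℕ} {v : Fin n → ℝ} {k : ℕ} {b : Fin n → ℝ}

lemma utility_nonneg (hb : NashEq v k b) {i : Fin n} (hvi : 0 ≤ v i) :
    0 ≤ utility v k b i :=
  (utility_update_zero_nonneg k hb.1 hvi).trans (hb.2 i 0 le_rfl)

lemma price_le_of_wins (hb : NashEq v k b) {i : Fin n} (hi : wins b i) (hvi : 0 ≤ v i) :
    price k b ≤ v i := by
  have := hb.utility_nonneg hvi
  rw [utility_of_wins v k hi] at this
  linarith

end NashEq

theorem stmt1 {n : ℕ} (hn : 2 ≤ n) (v : Fin n → ℝ) (hv : StrictAnti v) (hvpos : ∀ i, 0 < v i)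
    (b : Fin n → ℝ) (hb : NashEq v 2 b) :
    0 ≤ price 2 b ∧ price 2 b ≤ v ⟨0, by omega⟩ := by
  refine ⟨price_nonneg hb.1 2, ?_⟩
  obtain ⟨i, hi⟩ := exists_wins (by omega) b
  calc price 2 b ≤ v i := hb.price_le_of_wins hi (hvpos i).le
    _ ≤ v ⟨0, by omega⟩ := hv.antitone (Nat.zero_le i.val)
end

section
/- For the k-price auction with 3 ≤ k ≤ n, in any pure-strategy Nash equilibrium the price b_{(k)} satisfies b_{(k)} ≥ v_{n−(k−3)}; that is, the revenue cannot fall below the (n−k+3)-th highest valuation. -/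
/-!
Suppose the price `P = b_(k)` were below `v_{n+3-k}`. Then at least `n+3-k` agents value the
item above `P`, while at most `k-1` bids exceed `P`. An agent who, after outbidding everyone,
would face at most `k-1` bids above `P` (herself included) pays at most `P`; if her value exceeds
`P`, equilibrium forces her to be the winner already. Counting shows at least two such agents
exist (all of the high-value agents if at most `k-2` bids exceed `P`, otherwise those whose bid
also exceeds `P`), but the winner is unique.
-/

open Classical

open Finset

theorem List.Pairwise.lt_getElem_iff_lt_countP {α : Type*} [LinearOrder α] {s : List α}
    (hs : s.Pairwise (· ≥ ·)) (x : α) {k : ℕ} (hk : k < s.length) :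
    x < s[k] ↔ k < s.countP (x < ·) := by
  induction s generalizing k with
  | nil => simp at hk
  | cons a t ih =>
    rw [List.pairwise_cons] at hs
    by_cases hxa : x < a
    · cases k with
      | zero => simp [hxa]
      | succ k => simp [hxa, ih hs.2 (by simpa using hk)]
    · have hle : ∀ y ∈ a :: t, y ≤ x := by
        simp only [List.mem_cons, forall_eq_or_imp]
        exact ⟨not_lt.1 hxa, fun y hy => (hs.1 y hy).trans (not_lt.1 hxa)⟩
      have hzero : (a :: t).countP (x < ·) = 0 :=
        List.countP_eq_zero.2 fun y hy => by simpa using hle y hy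
      simpa [hzero] using hle _ (List.getElem_mem hk)

theorem List.countP_ofFn_eq_card_filter {α : Type*} {n : ℕ} (f : Fin n → α) (p : α → Prop)
    [DecidablePred p] : (List.ofFn f).countP (p ·) = #{j | p (f j)} := by
  rw [← Multiset.coe_countP, ← Fin.univ_val_map, Multiset.countP_map]
  rfl

theorem lt_kthHighest_iff {n : ℕ} (b : Fin n → ℝ) {k : ℕ} (hk0 : 1 ≤ k) (hkn : k ≤ n) (x : ℝ) :
    x < kthHighest b k ↔ k ≤ #{j | x < b j} := by
  set s := (List.ofFn b).mergeSort (fun x y => decide (y ≤ x))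
  have hks : k - 1 < s.length := by simp only [s, List.length_mergeSort, List.length_ofFn]; omega
  have hsorted : s.Pairwise (· ≥ ·) := List.pairwise_mergeSort' (· ≥ ·) _
  rw [kthHighest, List.getD_eq_getElem s 0 hks, hsorted.lt_getElem_iff_lt_countP x hks,
    (List.mergeSort_perm _ _).countP_eq, List.countP_ofFn_eq_card_filter]
  omega

theorem card_lt_kthHighest_lt {n : ℕ} (b : Fin n → ℝ) {k : ℕ} (hk0 : 1 ≤ k) (hkn : k ≤ n) :
    #{j | kthHighest b k < b j} < k :=
  not_le.1 fun h => lt_irrefl _ ((lt_kthHighest_iff b hk0 hkn _).2 h)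

theorem kthHighest_update_le {n : ℕ} (b : Fin n → ℝ) {k : ℕ} (hkn : k ≤ n) (i : Fin n)
    (c x : ℝ) (hcount : #(({j | x < b j} : Finset (Fin n)).erase i) + 1 < k) :
    kthHighest (Function.update b i c) k ≤ x := by
  refine not_lt.1 fun hx => ?_
  have hsub : ({j | x < Function.update b i c j} : Finset (Fin n)) ⊆
      insert i (({j | x < b j} : Finset (Fin n)).erase i) := by
    intro j hj
    rcases eq_or_ne j i with rfl | hji
    · exact mem_insert_self _ _
    · simp_all
  have := (lt_kthHighest_iff _ (by omega) hkn x).1 hx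
  have := (card_le_card hsub).trans (card_insert_le _ _)
  omega

theorem wins_unique {n : ℕ} {b : Fin n → ℝ} {i j : Fin n} (hi : wins b i) (hj : wins b j) :
    i = j :=
  le_antisymm (hi.2 j (le_antisymm (hi.1 j) (hj.1 i))) (hj.2 i (le_antisymm (hj.1 i) (hi.1 j)))

theorem wins_update_of_forall_lt {n : ℕ} (b : Fin n → ℝ) (i : Fin n) {c : ℝ}
    (hc : ∀ j, b j < c) : wins (Function.update b i c) i := by
  refine ⟨fun j => ?_, fun j hj => ?_⟩ <;> rcases eq_or_ne j i with rfl | hji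
  · rfl
  · simpa [Function.update_of_ne hji] using (hc j).le
  · rfl
  · rw [Function.update_of_ne hji, Function.update_self] at hj
    exact absurd hj (hc j).ne

theorem exists_nonneg_forall_lt {n : ℕ} (b : Fin n → ℝ) : ∃ c, 0 ≤ c ∧ ∀ j, b j < c := by
  obtain ⟨M, hM⟩ := (Set.finite_range b).bddAbove
  exact ⟨max M 0 + 1, by positivity,
    fun j => (hM (Set.mem_range_self j)).trans_lt (by linarith [le_max_left M 0])⟩

/-- Otherwise agent `i` would deviate to a bid above everyone's, win, and pay at most `x`. -/
theorem NashEq.wins_of_card_erase_lt {n : ℕ} {v : Fin n → ℝ} {k : ℕ} {b : Fin n → ℝ}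
    (hb : NashEq v k b) (hkn : k ≤ n) {i : Fin n} {x : ℝ}
    (hcount : #(({j | x < b j} : Finset (Fin n)).erase i) + 1 < k) (hxi : x < v i) : wins b i := by
  by_contra hloss
  obtain ⟨c, hc0, hc⟩ := exists_nonneg_forall_lt b
  have hdev := hb.2 i c hc0
  have hprice : price k (Function.update b i c) ≤ x := by
    rw [price, if_neg (by omega)]
    exact kthHighest_update_le b hkn i c x hcount
  rw [utility, if_pos (wins_update_of_forall_lt b i hc), utility, if_neg hloss] at hdev
  linarith

theorem Antitone.succ_le_card_lt {n : ℕ} {v : Fin n → ℝ} (hv : Antitone v) {m : Fin n} {x : ℝ}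
    (hx : x < v m) : (m : ℕ) + 1 ≤ #{j | x < v j} := by
  rw [← Fin.card_Iic]
  exact card_le_card fun j hj => by simpa using hx.trans_le (hv (mem_Iic.1 hj))

theorem one_lt_card_filter_card_erase_lt {α : Type*} [Fintype α] [DecidableEq α]
    {G H : Finset α} {k : ℕ} (hG : #G < k) (hk : k ≤ Fintype.card α)
    (hH : Fintype.card α + 3 ≤ #H + k) : 1 < #{j ∈ H | #(G.erase j) + 1 < k} := by
  by_cases hGk : #G + 1 < k
  · have hall : {j ∈ H | #(G.erase j) + 1 < k} = H :=
      filter_true_of_mem fun j _ => (Nat.succ_le_succ card_erase_le).trans_lt hGk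
    rw [hall]
    omega
  · have hsub : H ∩ G ⊆ {j ∈ H | #(G.erase j) + 1 < k} := fun j hj => by
      rw [mem_inter] at hj
      rw [mem_filter, card_erase_of_mem hj.2]
      have := card_pos.2 ⟨j, hj.2⟩
      exact ⟨hj.1, by omega⟩
    have := card_union_add_card_inter H G
    have := card_le_univ (H ∪ G)
    have := card_le_card hsub
    omega

theorem vIdx_eq {n : ℕ} (v : Fin n → ℝ) {j : ℕ} (h1 : 1 ≤ j) (h2 : j ≤ n) :
    vIdx v j = v ⟨j - 1, by omega⟩ :=
  dif_pos ⟨h1, h2⟩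

theorem stmt2_general {n : ℕ} (v : Fin n → ℝ) (hv : StrictAnti v) (k : ℕ) (hk3 : 3 ≤ k) (hkn : k ≤ n)
    (b : Fin n → ℝ) (hb : NashEq v k b) :
    vIdx v (n + 3 - k) ≤ kthHighest b k := by
  rw [vIdx_eq v (by omega) (by omega)]
  by_contra! hlt
  have hG := card_lt_kthHighest_lt b (by omega) hkn
  have hH : Fintype.card (Fin n) + 3 ≤ #{j | kthHighest b k < v j} + k := by
    rw [Fintype.card_fin]
    have := hv.antitone.succ_le_card_lt hlt
    rw [Fin.val_mk] at this
    omega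
  obtain ⟨i, hi, j, hj, hij⟩ := one_lt_card.1 <| one_lt_card_filter_card_erase_lt hG
    (by simpa using hkn) hH
  rw [mem_filter, mem_filter_univ] at hi hj
  exact hij (wins_unique (hb.wins_of_card_erase_lt hkn hi.2 hi.1)
    (hb.wins_of_card_erase_lt hkn hj.2 hj.1))

theorem stmt2 {n : ℕ} (hn : 2 ≤ n) (v : Fin n → ℝ) (hv : StrictAnti v) (hvpos : ∀ i, 0 < v i) (k : ℕ) (hk3 : 3 ≤ k) (hkn : k ≤ n)
    (b : Fin n → ℝ) (hb : NashEq v k b) :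
    vIdx v (n + 3 - k) ≤ kthHighest b k :=
  stmt2_general v hv k hk3 hkn b hb
end

section
/- For the k-price auction with 2 ≤ k ≤ n and any p with v_{n−(k−3)} ≤ p ≤ v_1 (where v_{n+1} = 0), the bid profile in which agent 1 bids v_1, agents 2 through n−(k−2) bid p, and the remaining k−2 agents bid v_1, is a pure-strategy Nash equilibrium in which agent 1 wins and pays p. -/
open Classical

/-! In the profile, agent 1 and the last k - 2 agents bid v₁ and everybody else bids p, so all
n ≥ k bids are at least p while at most k - 1 exceed it: the k-th highest bid is p. Agent 1 wins
by the tie-break, and any deviation that keeps her winning leaves the price at p. Any other agent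
must bid strictly above v₁ to win. If she was one of the last k - 2 agents, the price stays p,
which is at least her value by the choice of p. Otherwise k bids are now at least v₁ and only
hers exceeds it, so she pays v₁, again at least her value. -/

open Finset

namespace List

variable {α : Type*} [LinearOrder α] {l : List α} {i : ℕ}

theorem countP_getElem_lt_le (hl : l.Pairwise (· ≥ ·)) (hi : i < l.length) :
    l.countP (fun y => l[i] < y) ≤ i := by
  have hrest : (l[i] :: l.drop (i + 1)).countP (fun y => l[i] < y) = 0 := by
    have hpw := drop_eq_getElem_cons hi ▸ hl.drop (i := i)
    rw [countP_eq_zero]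
    intro y hy
    rcases mem_cons.mp hy with rfl | hy
    · simp
    · simpa using (pairwise_cons.mp hpw).1 y hy
  calc l.countP (fun y => l[i] < y)
      = (l.take i ++ l.drop i).countP (fun y => l[i] < y) := by rw [take_append_drop]
    _ ≤ i := by
      rw [countP_append, drop_eq_getElem_cons hi, hrest, add_zero]
      exact countP_le_length.trans (length_take_le _ _)

theorem succ_le_countP_getElem_le (hl : l.Pairwise (· ≥ ·)) (hi : i < l.length) :
    i + 1 ≤ l.countP (fun y => l[i] ≤ y) := by
  have htake : (l.take (i + 1)).countP (fun y => l[i] ≤ y) = i + 1 := by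
    rw [countP_eq_length.mpr, length_take, min_eq_left (by omega)]
    intro y hy
    obtain ⟨j, hj, rfl⟩ := mem_iff_getElem.mp hy
    rw [getElem_take]
    rcases (show j < i ∨ j = i by rw [length_take] at hj; omega) with hji | rfl
    · simpa using pairwise_iff_getElem.mp hl j i _ hi hji
    · simp
  exact htake ▸ (take_sublist _ _).countP_le

end List

theorem List.countP_ofFn {α : Type*} {n : ℕ} (b : Fin n → α) (p : α → Prop) [DecidablePred p] :
    (List.ofFn b).countP (fun x => p x) = #{j | p (b j)} := by
  rw [← Multiset.coe_countP, ← Fin.univ_val_map, Multiset.countP_map]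
  rfl

theorem kthHighest_eq_of_card {n k : ℕ} {b : Fin n → ℝ} {x : ℝ} (hk : 0 < k)
    (hle : k ≤ #{j | x ≤ b j}) (hlt : #{j | x < b j} < k) : kthHighest b k = x := by
  set l := (List.ofFn b).mergeSort (fun x y => decide (y ≤ x)) with hl_def
  have hperm : l.Perm (List.ofFn b) := List.mergeSort_perm _ _
  have hl : l.Pairwise (· ≥ ·) := by
    simpa using List.pairwise_mergeSort (le := fun x y : ℝ => decide (y ≤ x))
      (fun a b c hab hbc => by simp only [decide_eq_true_eq] at *; linarith) (fun a b => by simp [le_total]) (List.ofFn b)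
  have hcount (p : ℝ → Prop) [DecidablePred p] : l.countP (fun y => p y) = #{j | p (b j)} := by
    rw [hperm.countP_eq, List.countP_ofFn]
  have hlen : k - 1 < l.length := by
    rw [hperm.length_eq, List.length_ofFn]
    exact lt_of_lt_of_le (by omega) (hle.trans (card_le_univ _) |>.trans_eq (Fintype.card_fin n))
  rw [kthHighest, ← hl_def, List.getD_eq_getElem _ _ hlen]
  apply le_antisymm
  · by_contra! hxa
    have := (List.succ_le_countP_getElem_le hl hlen).trans
      (List.countP_mono_left (q := fun y => x < y) fun y _ hy => by
        simp only [decide_eq_true_eq] at hy ⊢; linarith)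
    rw [hcount] at this
    omega
  · by_contra! hax
    have := (List.countP_mono_left (p := fun y => x ≤ y) (q := fun y => l[k - 1] < y)
      fun y _ hy => by simp only [decide_eq_true_eq] at hy ⊢; linarith).trans
        (List.countP_getElem_lt_le hl hlen)
    rw [hcount] at this
    omega

theorem price_eq_kthHighest {n k : ℕ} (hkn : k ≤ n) (b : Fin n → ℝ) :
    price k b = kthHighest b k :=
  if_neg (by omega)

theorem price_eq_of_forall_le {n k : ℕ} {b : Fin n → ℝ} {S : Finset (Fin n)} {x : ℝ}
    (hkn : k ≤ n) (hSk : #S < k) (hle : ∀ j, x ≤ b j) (hlt : ∀ j, x < b j → j ∈ S) :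
    price k b = x := by
  rw [price_eq_kthHighest hkn]
  apply kthHighest_eq_of_card (by omega)
  · rwa [filter_true_of_mem fun j _ => hle j, card_univ, Fintype.card_fin]
  · exact (card_le_card fun j hj => hlt j (mem_filter.mp hj).2).trans_lt hSk

theorem wins.lt_of_lt {n : ℕ} {b : Fin n → ℝ} {i j : Fin n} (h : wins b i) (hji : j < i) :
    b j < b i :=
  (h.1 j).lt_of_ne fun heq => (h.2 j heq).not_gt hji

def twoLevelBids {n : ℕ} (S : Finset (Fin n)) (high low : ℝ) : Fin n → ℝ :=
  fun j => if j ∈ S then high else low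

section TwoLevelBids

variable {n k : ℕ} {S : Finset (Fin n)} {high low : ℝ} {i : Fin n}

theorem twoLevelBids_of_mem (hi : i ∈ S) : twoLevelBids S high low i = high := if_pos hi

theorem twoLevelBids_of_notMem (hi : i ∉ S) : twoLevelBids S high low i = low := if_neg hi

theorem low_le_twoLevelBids (hlh : low ≤ high) (j : Fin n) : low ≤ twoLevelBids S high low j := by
  unfold twoLevelBids; split_ifs <;> simp [hlh]

theorem twoLevelBids_le_high (hlh : low ≤ high) (j : Fin n) : twoLevelBids S high low j ≤ high := by
  unfold twoLevelBids; split_ifs <;> simp [hlh]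

theorem mem_of_low_lt_twoLevelBids {j : Fin n} (h : low < twoLevelBids S high low j) : j ∈ S := by
  by_contra hj
  rw [twoLevelBids_of_notMem hj] at h
  exact h.false

theorem price_update_twoLevelBids_of_mem (hkn : k ≤ n) (hSk : #S < k) (hlh : low ≤ high)
    (hi : i ∈ S) {x : ℝ} (hx : low ≤ x) :
    price k (Function.update (twoLevelBids S high low) i x) = low := by
  refine price_eq_of_forall_le hkn hSk (fun j => ?_) (fun j hj => ?_)
  · rcases eq_or_ne j i with rfl | hji
    · simpa using hx
    · simpa [hji] using low_le_twoLevelBids hlh j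
  · rcases eq_or_ne j i with rfl | hji
    · exact hi
    · exact mem_of_low_lt_twoLevelBids (by simpa [hji] using hj)

theorem price_update_twoLevelBids_of_notMem (hkn : k ≤ n) (hk : 1 < k) (hkS : k ≤ #S + 1)
    (hlh : low ≤ high) (hi : i ∉ S) {x : ℝ} (hx : high ≤ x) :
    price k (Function.update (twoLevelBids S high low) i x) = high := by
  rw [price_eq_kthHighest hkn]
  apply kthHighest_eq_of_card (by omega)
  · refine hkS.trans ((card_insert_of_notMem hi).symm.le.trans (card_le_card fun j hj => ?_))
    rcases mem_insert.mp hj with rfl | hjS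
    · simpa using hx
    · have hji : j ≠ i := fun h => hi (h ▸ hjS)
      simp [hji, twoLevelBids_of_mem hjS]
  · refine (card_le_card (t := {i}) fun j hj => ?_).trans_lt (by simpa using hk)
    rw [mem_singleton]
    by_contra hji
    have := (mem_filter.mp hj).2
    rw [Function.update_of_ne hji] at this
    exact (twoLevelBids_le_high hlh j).not_gt this

theorem wins_twoLevelBids_iff {i₀ : Fin n} (hi₀S : i₀ ∈ S) (hi₀ : ∀ j, i₀ ≤ j)
    (hlh : low ≤ high) : wins (twoLevelBids S high low) i ↔ i = i₀ := by
  refine ⟨fun hw => ?_, ?_⟩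
  · by_contra hne
    have := hw.lt_of_lt (lt_of_le_of_ne (hi₀ i) (Ne.symm hne))
    rw [twoLevelBids_of_mem hi₀S] at this
    exact (twoLevelBids_le_high hlh i).not_gt this
  · rintro rfl
    exact ⟨fun j => twoLevelBids_of_mem hi₀S ▸ twoLevelBids_le_high hlh j, fun j _ => hi₀ j⟩

end TwoLevelBids

section Equilibrium

variable {n k : ℕ} {S : Finset (Fin n)} {v : Fin n → ℝ} {i₀ : Fin n} {p : ℝ}

theorem price_twoLevelBids {high : ℝ} (hkn : k ≤ n) (hSk : #S < k) (hph : p ≤ high) :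
    price k (twoLevelBids S high p) = p :=
  price_eq_of_forall_le hkn hSk (low_le_twoLevelBids hph) fun _ => mem_of_low_lt_twoLevelBids

theorem utility_twoLevelBids_nonneg (hkn : k ≤ n) (hSk : #S < k) (hi₀S : i₀ ∈ S)
    (hi₀ : ∀ j, i₀ ≤ j) (hpv : p ≤ v i₀) (i : Fin n) :
    0 ≤ utility v k (twoLevelBids S (v i₀) p) i := by
  rw [utility, wins_twoLevelBids_iff hi₀S hi₀ hpv]
  split_ifs with hi
  · rw [hi, price_twoLevelBids hkn hSk hpv, sub_nonneg]
    exact hpv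
  · exact le_rfl

theorem utility_update_twoLevelBids_le (hkn : k ≤ n) (hS : #S + 1 = k) (hi₀S : i₀ ∈ S)
    (hi₀ : ∀ j, i₀ ≤ j) (hpv : p ≤ v i₀) (hvS : ∀ j ∈ S, j ≠ i₀ → v j ≤ p)
    (hv : ∀ j, v j ≤ v i₀) (i : Fin n) (x : ℝ) :
    utility v k (Function.update (twoLevelBids S (v i₀) p) i x) i
      ≤ utility v k (twoLevelBids S (v i₀) p) i := by
  set b := twoLevelBids S (v i₀) p
  have hSk : #S < k := by omega
  by_cases hw : wins (Function.update b i x) i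
  swap
  · rw [utility, if_neg hw]
    exact utility_twoLevelBids_nonneg hkn hSk hi₀S hi₀ hpv i
  rw [utility, if_pos hw]
  rcases eq_or_ne i i₀ with rfl | hne
  · obtain ⟨j, -, hjS⟩ := exists_mem_notMem_of_card_lt_card (s := S) (t := univ)
      (by simpa using hSk.trans_le hkn)
    have hpx : p ≤ x := by
      simpa [(ne_of_mem_of_not_mem hi₀S hjS).symm, b, twoLevelBids_of_notMem hjS] using hw.1 j
    rw [price_update_twoLevelBids_of_mem hkn hSk hpv hi₀S hpx, utility,
      if_pos ((wins_twoLevelBids_iff hi₀S hi₀ hpv).mpr rfl), price_twoLevelBids hkn hSk hpv]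
  · -- the top-priority agent wins ties, so outbidding it requires a strictly higher bid
    have hvx : v i₀ < x := by
      simpa [hne.symm, b, twoLevelBids_of_mem hi₀S] using
        hw.lt_of_lt (lt_of_le_of_ne (hi₀ i) hne.symm)
    rw [utility, if_neg (by rwa [wins_twoLevelBids_iff hi₀S hi₀ hpv]), sub_nonpos]
    by_cases hiS : i ∈ S
    · rw [price_update_twoLevelBids_of_mem hkn hSk hpv hiS (hpv.trans hvx.le)]
      exact hvS i hiS hne
    · have hk : 1 < k := by have := card_pos.mpr ⟨i₀, hi₀S⟩; omega
      rw [price_update_twoLevelBids_of_notMem hkn hk hS.ge hpv hiS hvx.le]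
      exact hv i

theorem nashEq_twoLevelBids (hkn : k ≤ n) (hS : #S + 1 = k) (hi₀S : i₀ ∈ S)
    (hi₀ : ∀ j, i₀ ≤ j) (hp : 0 ≤ p) (hpv : p ≤ v i₀) (hvS : ∀ j ∈ S, j ≠ i₀ → v j ≤ p)
    (hv : ∀ j, v j ≤ v i₀) :
    NashEq v k (twoLevelBids S (v i₀) p) ∧ wins (twoLevelBids S (v i₀) p) i₀ ∧
      price k (twoLevelBids S (v i₀) p) = p :=
  ⟨⟨fun j => hp.trans (low_le_twoLevelBids hpv j),
      fun i x _ => utility_update_twoLevelBids_le hkn hS hi₀S hi₀ hpv hvS hv i x⟩,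
    (wins_twoLevelBids_iff hi₀S hi₀ hpv).mpr rfl, price_twoLevelBids hkn (by omega) hpv⟩

end Equilibrium

theorem vIdx_succ {n : ℕ} (v : Fin n → ℝ) {j : ℕ} (hj : j < n) : vIdx v (j + 1) = v ⟨j, hj⟩ :=
  dif_pos ⟨by omega, hj⟩

theorem vIdx_nonneg {n : ℕ} {v : Fin n → ℝ} (hv : ∀ i, 0 ≤ v i) (j : ℕ) : 0 ≤ vIdx v j := by
  unfold vIdx
  split_ifs
  exacts [hv _, le_rfl]

def highBidders (n k : ℕ) : Finset (Fin n) := {j | j.val = 0 ∨ n + 2 - k ≤ j.val}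

theorem card_highBidders {n k : ℕ} (hk2 : 2 ≤ k) (hkn : k ≤ n) : #(highBidders n k) + 1 = k := by
  have hmap : (highBidders n k).map Fin.valEmbedding = insert 0 (Ico (n + 2 - k) n) := by
    ext m
    simp only [highBidders, mem_map, mem_filter, mem_univ, true_and, Fin.valEmbedding_apply,
      mem_insert, mem_Ico]
    constructor
    · rintro ⟨j, hj, rfl⟩
      omega
    · intro hm
      exact ⟨⟨m, by omega⟩, by simpa using hm.imp_right And.left, rfl⟩
  rw [← card_map Fin.valEmbedding, hmap, card_insert_of_notMem (by rw [mem_Ico]; omega), Nat.card_Ico]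
  omega

theorem stmt4 {n : ℕ} (v : Fin n → ℝ) (hv : StrictAnti v) (hvpos : ∀ i, 0 < v i) (k : ℕ) (hk2 : 2 ≤ k) (hkn : k ≤ n)
    (p : ℝ) (hp1 : vIdx v (n + 3 - k) ≤ p) (hp2 : p ≤ v ⟨0, by omega⟩)
    (b : Fin n → ℝ)
    (hbdef : ∀ j : Fin n,
      b j = if j.val = 0 ∨ n + 2 - k ≤ j.val then v ⟨0, by omega⟩ else p) :
    NashEq v k b ∧ wins b ⟨0, by omega⟩ ∧ price k b = p := by
  set i₀ : Fin n := ⟨0, by omega⟩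
  have hb : b = twoLevelBids (highBidders n k) (v i₀) p :=
    funext fun j => by simp [hbdef, twoLevelBids, highBidders, i₀]
  subst hb
  have hi₀ : ∀ j, i₀ ≤ j := fun j => Nat.zero_le j.val
  refine nashEq_twoLevelBids hkn (card_highBidders hk2 hkn) (by simp [highBidders, i₀]) hi₀
    ((vIdx_nonneg (fun i => (hvpos i).le) _).trans hp1) hp2 ?_ fun j => hv.antitone (hi₀ j)
  intro j hjS hj
  have hjk : n + 2 - k ≤ j.val :=
    (by simpa [highBidders] using hjS : _ ∨ _).resolve_left fun h => hj (Fin.ext h)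
  calc v j ≤ v ⟨n + 2 - k, by omega⟩ := hv.antitone hjk
    _ = vIdx v (n + 3 - k) := by rw [show n + 3 - k = n + 2 - k + 1 by omega, vIdx_succ]
    _ ≤ p := hp1
end
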